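/- arXiv:1709.01542 — 3 statements merged into one kernel-verified Lean document; each statement's English description precedes it below -/
import Mathlib

section
/- Let H₇ be a connected simple graph containing two cycles C₁ and C₂ whose only common vertex is v, where d(v) ≥ 4 and C₂ is an endblock (every vertex of C₂ other than v has degree 2 in H₇). Let v₂ be a neighbor of v on C₁, let v₁ be a neighbor of v on C₂, and let v₀ be the neighbor of v₁ on C₂ other than v. Let H₈ = H₇ − {vv₂, v₀v₁} + {v₀v₂}. Then M₁(H₈) < M₁(H₇). -/
open scoped Classical

/-- The first Zagreb index: the sum of the squares of the vertex degrees. -/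
noncomputable def zagrebM1 {V : Type*} [Fintype V] (G : SimpleGraph V) : ℕ :=
  ∑ v : V, G.degree v ^ 2

/-!
Every degree weakly decreases under the operation: `v₀` trades its neighbour `v₁` for `v₂`,
`v₂` trades `v` for `v₀`, and `v` only loses `v₂`. The vertex `v₁` loses `v₀` and gains nothing,
because `v₂ ≠ v₁` (they lie on different cycles and `v₂ ≠ v`). Since `M₁` is a sum of squares of
degrees, it strictly decreases.
-/

namespace SimpleGraph

variable {V : Type*}

/-- Operation IV is the case `a = v`, `b = v₂`, `c = v₀`, `d = v₁`. -/
def replaceEdges (G : SimpleGraph V) (a b c d : V) : SimpleGraph V :=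
  fromEdgeSet ((G.edgeSet \ {s(a, b), s(c, d)}) ∪ {s(c, b)})

theorem replaceEdges_adj {G : SimpleGraph V} {a b c d x y : V} :
    (G.replaceEdges a b c d).Adj x y ↔
      ((G.Adj x y ∧ s(x, y) ≠ s(a, b) ∧ s(x, y) ≠ s(c, d)) ∨ s(x, y) = s(c, b)) ∧ x ≠ y := by
  simp only [replaceEdges, fromEdgeSet_adj, Set.mem_union, Set.mem_sdiff, Set.mem_insert_iff,
    Set.mem_singleton_iff, mem_edgeSet]
  tauto

variable [Fintype V] {G H : SimpleGraph V}

theorem degree_le_of_neighborFinset_subset_insert_erase {x y z : V} (hz : G.Adj x z)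
    (h : H.neighborFinset x ⊆ insert y ((G.neighborFinset x).erase z)) :
    H.degree x ≤ G.degree x := by
  rw [← card_neighborFinset_eq_degree, ← card_neighborFinset_eq_degree]
  calc _ ≤ _ := Finset.card_le_card h
    _ ≤ _ := Finset.card_insert_le _ _
    _ = _ := Finset.card_erase_add_one ((mem_neighborFinset _ _ _).2 hz)

theorem degree_lt_of_neighborFinset_subset_erase {x z : V} (hz : G.Adj x z)
    (h : H.neighborFinset x ⊆ (G.neighborFinset x).erase z) : H.degree x < G.degree x :=
  (Finset.card_le_card h).trans_lt (Finset.card_erase_lt_of_mem ((mem_neighborFinset _ _ _).2 hz))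

variable {a b c d : V}

theorem degree_replaceEdges_le (hab : G.Adj a b) (hcd : G.Adj c d) (x : V) :
    (G.replaceEdges a b c d).degree x ≤ G.degree x := by
  by_cases hxc : x = c
  · subst hxc
    refine degree_le_of_neighborFinset_subset_insert_erase (y := b) hcd fun y hy => ?_
    simp only [mem_neighborFinset, replaceEdges_adj, Finset.mem_insert, Finset.mem_erase] at hy ⊢
    grind
  by_cases hxb : x = b
  · subst hxb
    refine degree_le_of_neighborFinset_subset_insert_erase (y := c) hab.symm fun y hy => ?_
    simp only [mem_neighborFinset, replaceEdges_adj, Finset.mem_insert, Finset.mem_erase] at hy ⊢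
    grind
  · refine Finset.card_le_card fun y hy => ?_
    simp only [mem_neighborFinset, replaceEdges_adj] at hy ⊢
    grind

theorem degree_replaceEdges_lt (hcd : G.Adj c d) (hbd : b ≠ d) :
    (G.replaceEdges a b c d).degree d < G.degree d := by
  refine degree_lt_of_neighborFinset_subset_erase hcd.symm fun y hy => ?_
  simp only [mem_neighborFinset, replaceEdges_adj, Finset.mem_erase] at hy ⊢
  grind [hcd.ne]

end SimpleGraph

open SimpleGraph

theorem zagrebM1_lt_of_degree_le {V : Type*} [Fintype V] {G H : SimpleGraph V}
    (hle : ∀ x, H.degree x ≤ G.degree x) (hlt : ∃ x, H.degree x < G.degree x) :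
    zagrebM1 H < zagrebM1 G :=
  Finset.sum_lt_sum (fun x _ => Nat.pow_le_pow_left (hle x) 2)
    (hlt.imp fun x hx => ⟨Finset.mem_univ x, Nat.pow_lt_pow_left hx two_ne_zero⟩)

theorem zagrebM1_replaceEdges_lt {V : Type*} [Fintype V] {G : SimpleGraph V} {a b c d : V}
    (hab : G.Adj a b) (hcd : G.Adj c d) (hbd : b ≠ d) :
    zagrebM1 (G.replaceEdges a b c d) < zagrebM1 G :=
  zagrebM1_lt_of_degree_le (degree_replaceEdges_le hab hcd) ⟨d, degree_replaceEdges_lt hcd hbd⟩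

theorem M1_operationIV_lt_general {V : Type*} [Fintype V] (H₇ : SimpleGraph V)
    (v v₀ v₁ v₂ : V)
    (c₁ : H₇.Walk v v) (c₂ : H₇.Walk v v)
    (hmeet : ∀ x, x ∈ c₁.support → x ∈ c₂.support → x = v)
    (hv₂ : s(v, v₂) ∈ c₁.edges)
    (hv₁ : s(v, v₁) ∈ c₂.edges)
    (hv₀ : s(v₁, v₀) ∈ c₂.edges)
    (H₈ : SimpleGraph V)
    (hH₈ : H₈ = SimpleGraph.fromEdgeSet
      ((H₇.edgeSet \ {s(v, v₂), s(v₀, v₁)}) ∪ {s(v₀, v₂)})) :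
    zagrebM1 H₈ < zagrebM1 H₇ := by
  subst hH₈
  have hvv₂ : H₇.Adj v v₂ := c₁.adj_of_mem_edges hv₂
  have hv₀v₁ : H₇.Adj v₀ v₁ := (c₂.adj_of_mem_edges hv₀).symm
  have hv₂v₁ : v₂ ≠ v₁ := fun h =>
    hvv₂.ne' (hmeet v₂ (c₁.snd_mem_support_of_mem_edges hv₂)
      (h ▸ c₂.snd_mem_support_of_mem_edges hv₁))
  exact zagrebM1_replaceEdges_lt hvv₂ hv₀v₁ hv₂v₁

/-- Operation IV: `H₇` is connected and contains two cycles `c₁` and `c₂` whose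
only common vertex is `v`, with `d(v) ≥ 4` and `c₂` an endblock (every vertex of
`c₂` other than `v` has degree 2 in `H₇`). If `v₂` is a neighbor of `v` on `c₁`,
`v₁` is a neighbor of `v` on `c₂`, and `v₀` is the neighbor of `v₁` on `c₂` other
than `v`, then `H₈ = H₇ - {vv₂, v₀v₁} + {v₀v₂}` satisfies `M₁(H₈) < M₁(H₇)`. -/
theorem M1_operationIV_lt {V : Type*} [Fintype V] (H₇ : SimpleGraph V)
    (hconn : H₇.Connected) (v v₀ v₁ v₂ : V)
    (c₁ : H₇.Walk v v) (c₂ : H₇.Walk v v)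
    (hc₁ : c₁.IsCycle) (hc₂ : c₂.IsCycle)
    (hmeet : ∀ x, x ∈ c₁.support → x ∈ c₂.support → x = v)
    (hdeg : 4 ≤ H₇.degree v)
    (hend : ∀ x ∈ c₂.support, x ≠ v → H₇.degree x = 2)
    (hv₂ : s(v, v₂) ∈ c₁.edges)
    (hv₁ : s(v, v₁) ∈ c₂.edges)
    (hv₀ : s(v₁, v₀) ∈ c₂.edges) (hv₀v : v₀ ≠ v)
    (H₈ : SimpleGraph V)
    (hH₈ : H₈ = SimpleGraph.fromEdgeSet
      ((H₇.edgeSet \ {s(v, v₂), s(v₀, v₁)}) ∪ {s(v₀, v₂)})) :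
    zagrebM1 H₈ < zagrebM1 H₇ :=
  M1_operationIV_lt_general H₇ v v₀ v₁ v₂ c₁ c₂ hmeet hv₂ hv₁ hv₀ H₈ hH₈
end

section
/- Let H be a connected simple graph with |E(H)| ≥ |V(H)|, let u be a vertex of H lying on a cycle of H, and for integers a, b ≥ 2 let H(a,b) denote the graph obtained from H by attaching two pendant paths at the same vertex u, one with a − 1 new vertices and one with b − 1 new vertices. Then there exists a graph H′ on |V(H)| + 1 vertices, obtained from H by subdividing an edge lying on a cycle of H (with w denoting the new subdivision vertex), such that M₁(H(a,b)) ≥ M₁(H′ with a single pendant path of a + b − 3 new vertices attached at w). -/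
open scoped Classical

/-- The graph obtained from `G` by attaching a pendant path with `t` new vertices
at the vertex `x`: we add new vertices `0, 1, …, t-1` and the edges
`x–0, 0–1, …, (t-2)–(t-1)`. -/
def attachPath {V : Type*} (G : SimpleGraph V) (x : V) (t : ℕ) :
    SimpleGraph (V ⊕ Fin t) :=
  SimpleGraph.fromEdgeSet
    ((Sym2.map Sum.inl '' G.edgeSet)
      ∪ {e | ∃ h : 0 < t, e = s(Sum.inl x, Sum.inr ⟨0, h⟩)}
      ∪ {e | ∃ (i : ℕ) (h : i + 1 < t),
          e = s(Sum.inr ⟨i, Nat.lt_of_succ_lt h⟩, Sum.inr ⟨i + 1, h⟩)})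

/-- The graph obtained from `G` by subdividing the edge `w₁w₂`: the edge `w₁w₂`
is deleted, a new vertex `Sum.inr ()` is added, and it is joined to `w₁` and
`w₂`. -/
def subdivideEdge {V : Type*} (G : SimpleGraph V) (w₁ w₂ : V) :
    SimpleGraph (V ⊕ Unit) :=
  SimpleGraph.fromEdgeSet
    ((Sym2.map Sum.inl '' (G.edgeSet \ {s(w₁, w₂)}))
      ∪ {s(Sum.inl w₁, Sum.inr ()), s(Sum.inl w₂, Sum.inr ())})

lemma attachPath_adj {V : Type*} (G : SimpleGraph V) (x : V) (t : ℕ) (p q : V ⊕ Fin t) :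
    (attachPath G x t).Adj p q ↔
      (∃ a b, G.Adj a b ∧ p = Sum.inl a ∧ q = Sum.inl b) ∨
      (∃ h : 0 < t, p = Sum.inl x ∧ q = Sum.inr ⟨0, h⟩ ∨ p = Sum.inr ⟨0, h⟩ ∧ q = Sum.inl x) ∨
      (∃ i, ∃ h : i + 1 < t,
        p = Sum.inr ⟨i, Nat.lt_of_succ_lt h⟩ ∧ q = Sum.inr ⟨i+1, h⟩ ∨
        p = Sum.inr ⟨i+1, h⟩ ∧ q = Sum.inr ⟨i, Nat.lt_of_succ_lt h⟩) := by
  simp only [attachPath, SimpleGraph.fromEdgeSet_adj, Set.mem_union, Set.mem_image,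
    Set.mem_setOf_eq, Sym2.exists, SimpleGraph.mem_edgeSet, Sym2.map_pair_eq, Sym2.eq_iff]
  constructor
  · rintro ⟨hmem, hne⟩
    rcases hmem with (⟨a, b, hab, (⟨rfl, rfl⟩ | ⟨rfl, rfl⟩)⟩ | ⟨h, (⟨rfl, rfl⟩ | ⟨rfl, rfl⟩)⟩) |
      ⟨i, h, (⟨rfl, rfl⟩ | ⟨rfl, rfl⟩)⟩
    · exact Or.inl ⟨a, b, hab, rfl, rfl⟩
    · exact Or.inl ⟨b, a, hab.symm, rfl, rfl⟩
    · exact Or.inr (Or.inl ⟨h, Or.inl ⟨rfl, rfl⟩⟩)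
    · exact Or.inr (Or.inl ⟨h, Or.inr ⟨rfl, rfl⟩⟩)
    · exact Or.inr (Or.inr ⟨i, h, Or.inl ⟨rfl, rfl⟩⟩)
    · exact Or.inr (Or.inr ⟨i, h, Or.inr ⟨rfl, rfl⟩⟩)
  · rintro (⟨a, b, hab, rfl, rfl⟩ | ⟨h, (⟨rfl, rfl⟩ | ⟨rfl, rfl⟩)⟩ |
      ⟨i, h, (⟨rfl, rfl⟩ | ⟨rfl, rfl⟩)⟩)
    · exact ⟨Or.inl (Or.inl ⟨a, b, hab, Or.inl ⟨rfl, rfl⟩⟩), by simp [hab.ne]⟩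
    · exact ⟨Or.inl (Or.inr ⟨h, Or.inl ⟨rfl, rfl⟩⟩), by simp⟩
    · exact ⟨Or.inl (Or.inr ⟨h, Or.inr ⟨rfl, rfl⟩⟩), by simp⟩
    · exact ⟨Or.inr ⟨i, h, Or.inl ⟨rfl, rfl⟩⟩, by simp [Fin.ext_iff]⟩
    · exact ⟨Or.inr ⟨i, h, Or.inr ⟨rfl, rfl⟩⟩, by simp [Fin.ext_iff]⟩

section AuxAttach
variable {V : Type*} [Fintype V] (G : SimpleGraph V) (x : V) (t : ℕ)

lemma attach_nf_inl (ht : 0 < t) (v : V) :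
    (attachPath G x t).neighborFinset (Sum.inl v) =
      (G.neighborFinset v).map ⟨Sum.inl, Sum.inl_injective⟩ ∪
        (if v = x then {Sum.inr ⟨0, ht⟩} else ∅) := by
  ext q
  simp only [SimpleGraph.mem_neighborFinset, attachPath_adj, Finset.mem_union,
    Finset.mem_map, Function.Embedding.coeFn_mk]
  constructor
  · rintro (⟨a, b, hab, heq, rfl⟩ | ⟨h, (⟨heq, rfl⟩ | ⟨heq, h2⟩)⟩ | ⟨i, h, (⟨heq, rfl⟩ | ⟨heq, rfl⟩)⟩)
    · cases heq; exact Or.inl ⟨b, by simpa using hab, rfl⟩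
    · cases heq; simp
    · exact absurd heq (by simp)
    · exact absurd heq (by simp)
    · exact absurd heq (by simp)
  · rintro (⟨b, hb, rfl⟩ | hq)
    · exact Or.inl ⟨v, b, by simpa using hb, rfl, rfl⟩
    · split at hq
      · next h => subst h; simp at hq; subst hq; exact Or.inr (Or.inl ⟨ht, Or.inl ⟨rfl, rfl⟩⟩)
      · simp at hq

lemma attach_degree_inl (ht : 0 < t) (v : V) :
    (attachPath G x t).degree (Sum.inl v) = G.degree v + if v = x then 1 else 0 := by
  rw [SimpleGraph.degree, attach_nf_inl G x t ht v]
  rw [Finset.card_union_of_disjoint]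
  · rw [Finset.card_map]
    congr 1
    split <;> simp
  · split <;> simp

lemma attach_nf_inr (i : ℕ) (hi : i < t) :
    (attachPath G x t).neighborFinset (Sum.inr ⟨i, hi⟩) =
      (if i = 0 then {Sum.inl x} else {Sum.inr ⟨i-1, by omega⟩}) ∪
        (if h : i + 1 < t then {Sum.inr ⟨i+1, h⟩} else ∅) := by
  ext q
  simp only [SimpleGraph.mem_neighborFinset, attachPath_adj, Finset.mem_union]
  constructor
  · rintro (⟨a, b, hab, heq, rfl⟩ | ⟨h, (⟨heq, rfl⟩ | ⟨heq, rfl⟩)⟩ | ⟨j, h, (⟨heq, rfl⟩ | ⟨heq, rfl⟩)⟩)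
    · exact absurd heq (by simp)
    · exact absurd heq (by simp)
    · simp only [Sum.inr.injEq, Fin.mk.injEq] at heq; subst heq
      simp
    · simp only [Sum.inr.injEq, Fin.mk.injEq] at heq; subst heq
      right; rw [dif_pos h]; simp
    · simp only [Sum.inr.injEq, Fin.mk.injEq] at heq; subst heq
      left; rw [if_neg (Nat.succ_ne_zero j)]
      simp only [Finset.mem_singleton, Sum.inr.injEq, Fin.mk.injEq]; omega
  · intro hq
    rcases hq with hq | hq
    · split at hq
      · next h0 =>
        subst h0; simp only [Finset.mem_singleton] at hq; subst hq
        exact Or.inr (Or.inl ⟨by omega, Or.inr ⟨rfl, rfl⟩⟩)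
      · next h0 =>
        simp only [Finset.mem_singleton] at hq; subst hq
        refine Or.inr (Or.inr ⟨i - 1, by omega, Or.inr ⟨?_, ?_⟩⟩) <;>
          simp [Fin.ext_iff] <;> omega
    · split at hq
      · next h1 =>
        simp only [Finset.mem_singleton] at hq; subst hq
        exact Or.inr (Or.inr ⟨i, h1, Or.inl ⟨rfl, rfl⟩⟩)
      · simp at hq

lemma attach_degree_inr (i : ℕ) (hi : i < t) :
    (attachPath G x t).degree (Sum.inr ⟨i, hi⟩) = if i + 1 < t then 2 else 1 := by
  rw [SimpleGraph.degree, attach_nf_inr G x t i hi, Finset.card_union_of_disjoint]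
  · have h1 : (if i = 0 then ({Sum.inl x} : Finset (V ⊕ Fin t)) else {Sum.inr ⟨i-1, by omega⟩}).card = 1 := by
      split <;> simp
    rw [h1]
    split <;> simp_all
  · split <;> split <;> simp [Fin.ext_iff] <;> omega
lemma zagreb_attach (ht : 0 < t) :
    zagrebM1 (attachPath G x t) + G.degree x ^ 2 + 3
      = zagrebM1 G + (G.degree x + 1) ^ 2 + 4 * t := by
  have hsplit : zagrebM1 (attachPath G x t)
      = ∑ v : V, (attachPath G x t).degree (Sum.inl v) ^ 2
        + ∑ i : Fin t, (attachPath G x t).degree (Sum.inr i) ^ 2 := by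
    rw [zagrebM1, Fintype.sum_sum_type]
  have h1 : ∑ v : V, (attachPath G x t).degree (Sum.inl v) ^ 2
      = ∑ v : V, (G.degree v + if v = x then 1 else 0) ^ 2 := by
    refine Finset.sum_congr rfl fun v _ => ?_
    rw [attach_degree_inl G x t ht v]
  have h2 : ∑ i : Fin t, (attachPath G x t).degree (Sum.inr i) ^ 2
      = ∑ i : Fin t, (if (i : ℕ) + 1 < t then 2 else 1) ^ 2 := by
    refine Finset.sum_congr rfl fun i _ => ?_
    have h := attach_degree_inr G x t i.1 i.2
    simp only [Fin.eta] at h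
    rw [h]
  have h3 : ∑ i : Fin t, ((if (i : ℕ) + 1 < t then 2 else 1 : ℕ)) ^ 2 + 3 = 4 * t := by
    rw [Fin.sum_univ_eq_sum_range (fun i => (if i + 1 < t then 2 else 1 : ℕ) ^ 2)]
    obtain ⟨s, rfl⟩ : ∃ s, t = s + 1 := ⟨t - 1, by omega⟩
    rw [Finset.sum_range_succ]
    have : ∀ i ∈ Finset.range s, (if i + 1 < s + 1 then 2 else 1 : ℕ) ^ 2 = 4 := by
      intro i hi; simp only [Finset.mem_range] at hi
      rw [if_pos (by omega)]; norm_num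
    rw [Finset.sum_congr rfl this, Finset.sum_const, Finset.card_range]
    simp; ring
  have h4 : ∑ v : V, (G.degree v + if v = x then 1 else 0) ^ 2 + G.degree x ^ 2
      = zagrebM1 G + (G.degree x + 1) ^ 2 := by
    classical
    rw [zagrebM1]
    rw [← Finset.add_sum_erase Finset.univ _ (Finset.mem_univ x),
        ← Finset.add_sum_erase Finset.univ (fun v => G.degree v ^ 2) (Finset.mem_univ x)]
    have : ∀ v ∈ Finset.univ.erase x, (G.degree v + if v = x then 1 else 0) ^ 2
        = G.degree v ^ 2 := by
      intro v hv
      rw [if_neg (Finset.ne_of_mem_erase hv), Nat.add_zero]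
    rw [Finset.sum_congr rfl this, if_pos rfl]
    ring
  rw [hsplit, h1, h2]
  omega
end AuxAttach

lemma subdivideEdge_adj {V : Type*} (G : SimpleGraph V) (w₁ w₂ : V) (p q : V ⊕ Unit) :
    (subdivideEdge G w₁ w₂).Adj p q ↔
      (∃ a b, G.Adj a b ∧ s(a, b) ≠ s(w₁, w₂) ∧ p = Sum.inl a ∧ q = Sum.inl b) ∨
      ((p = Sum.inl w₁ ∨ p = Sum.inl w₂) ∧ q = Sum.inr ()) ∨
      ((q = Sum.inl w₁ ∨ q = Sum.inl w₂) ∧ p = Sum.inr ()) := by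
  simp only [subdivideEdge, SimpleGraph.fromEdgeSet_adj, Set.mem_union, Set.mem_image,
    Set.mem_insert_iff, Set.mem_singleton_iff, Set.mem_diff, Sym2.exists,
    SimpleGraph.mem_edgeSet, Sym2.map_pair_eq, Sym2.eq_iff]
  constructor
  · rintro ⟨(⟨a, b, ⟨hab, hne⟩, (⟨rfl, rfl⟩ | ⟨rfl, rfl⟩)⟩ |
      ((⟨rfl, rfl⟩ | ⟨rfl, rfl⟩) | (⟨rfl, rfl⟩ | ⟨rfl, rfl⟩))), hpq⟩
    · exact Or.inl ⟨a, b, hab, fun h => hne (Sym2.eq_iff.mp h), rfl, rfl⟩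
    · refine Or.inl ⟨b, a, hab.symm, fun h => hne ?_, rfl, rfl⟩
      rcases Sym2.eq_iff.mp h with ⟨rfl, rfl⟩ | ⟨rfl, rfl⟩ <;> tauto
    · exact Or.inr (Or.inl ⟨Or.inl rfl, rfl⟩)
    · exact Or.inr (Or.inr ⟨Or.inl rfl, rfl⟩)
    · exact Or.inr (Or.inl ⟨Or.inr rfl, rfl⟩)
    · exact Or.inr (Or.inr ⟨Or.inr rfl, rfl⟩)
  · rintro (⟨a, b, hab, hne, rfl, rfl⟩ | ⟨(rfl | rfl), rfl⟩ | ⟨(rfl | rfl), rfl⟩)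
    · exact ⟨Or.inl ⟨a, b, ⟨hab, fun h => hne (Sym2.eq_iff.mpr h)⟩, Or.inl ⟨rfl, rfl⟩⟩, by simp [hab.ne]⟩
    · exact ⟨Or.inr (Or.inl (Or.inl ⟨rfl, rfl⟩)), by simp⟩
    · exact ⟨Or.inr (Or.inr (Or.inl ⟨rfl, rfl⟩)), by simp⟩
    · exact ⟨Or.inr (Or.inl (Or.inr ⟨rfl, rfl⟩)), by simp⟩
    · exact ⟨Or.inr (Or.inr (Or.inr ⟨rfl, rfl⟩)), by simp⟩

section
variable {V : Type*} [Fintype V] (G : SimpleGraph V) (w₁ w₂ : V)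

lemma subdivide_degree_inl (hadj : G.Adj w₁ w₂) (v : V) :
    (subdivideEdge G w₁ w₂).degree (Sum.inl v) = G.degree v := by
  classical
  by_cases h1 : v = w₁
  · subst h1
    have : (subdivideEdge G v w₂).neighborFinset (Sum.inl v)
        = ((G.neighborFinset v).erase w₂).map ⟨Sum.inl, Sum.inl_injective⟩ ∪ {Sum.inr ()} := by
      ext q
      simp only [SimpleGraph.mem_neighborFinset, subdivideEdge_adj, Finset.mem_union,
        Finset.mem_map, Finset.mem_erase, Function.Embedding.coeFn_mk, Finset.mem_singleton]
      constructor
      · rintro (⟨a, b, hab, hne, heq, rfl⟩ | ⟨hp, rfl⟩ | ⟨hq, hp⟩)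
        · cases heq
          refine Or.inl ⟨b, ⟨?_, by simpa using hab⟩, rfl⟩
          rintro rfl; exact hne rfl
        · exact Or.inr rfl
        · exact absurd hp (by simp)
      · rintro (⟨b, ⟨hbne, hb⟩, rfl⟩ | rfl)
        · refine Or.inl ⟨v, b, by simpa using hb, ?_, rfl, rfl⟩
          intro h
          rcases Sym2.eq_iff.mp h with ⟨-, h2⟩ | ⟨h2, -⟩
          · exact hbne h2
          · exact hadj.ne h2
        · exact Or.inr (Or.inl ⟨Or.inl trivial, rfl⟩)
    rw [SimpleGraph.degree, this, Finset.card_union_of_disjoint (by simp),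
      Finset.card_map, Finset.card_erase_of_mem (by simpa using hadj),
      Finset.card_singleton, SimpleGraph.card_neighborFinset_eq_degree]
    have : 0 < G.degree v := by
      rw [← SimpleGraph.card_neighborFinset_eq_degree]
      exact Finset.card_pos.2 ⟨w₂, by simpa using hadj⟩
    omega
  · by_cases h2 : v = w₂
    · subst h2
      have : (subdivideEdge G w₁ v).neighborFinset (Sum.inl v)
          = ((G.neighborFinset v).erase w₁).map ⟨Sum.inl, Sum.inl_injective⟩ ∪ {Sum.inr ()} := by
        ext q
        simp only [SimpleGraph.mem_neighborFinset, subdivideEdge_adj, Finset.mem_union,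
          Finset.mem_map, Finset.mem_erase, Function.Embedding.coeFn_mk, Finset.mem_singleton]
        constructor
        · rintro (⟨a, b, hab, hne, heq, rfl⟩ | ⟨hp, rfl⟩ | ⟨hq, hp⟩)
          · cases heq
            refine Or.inl ⟨b, ⟨?_, by simpa using hab⟩, rfl⟩
            rintro rfl; exact hne (Sym2.eq_swap)
          · exact Or.inr rfl
          · exact absurd hp (by simp)
        · rintro (⟨b, ⟨hbne, hb⟩, rfl⟩ | rfl)
          · refine Or.inl ⟨v, b, by simpa using hb, ?_, rfl, rfl⟩
            intro h
            rcases Sym2.eq_iff.mp h with ⟨h2, -⟩ | ⟨-, h2⟩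
            · exact hadj.ne' h2
            · exact hbne h2
          · exact Or.inr (Or.inl ⟨Or.inr trivial, rfl⟩)
      rw [SimpleGraph.degree, this, Finset.card_union_of_disjoint (by simp),
        Finset.card_map, Finset.card_erase_of_mem (by simpa using hadj.symm),
        Finset.card_singleton, SimpleGraph.card_neighborFinset_eq_degree]
      have : 0 < G.degree v := by
        rw [← SimpleGraph.card_neighborFinset_eq_degree]
        exact Finset.card_pos.2 ⟨w₁, by simpa using hadj.symm⟩
      omega
    · have : (subdivideEdge G w₁ w₂).neighborFinset (Sum.inl v)
          = (G.neighborFinset v).map ⟨Sum.inl, Sum.inl_injective⟩ := by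
        ext q
        simp only [SimpleGraph.mem_neighborFinset, subdivideEdge_adj, Finset.mem_map,
          Function.Embedding.coeFn_mk]
        constructor
        · rintro (⟨a, b, hab, hne, heq, rfl⟩ | ⟨hp, rfl⟩ | ⟨hq, hp⟩)
          · cases heq; exact ⟨b, by simpa using hab, rfl⟩
          · rcases hp with hp | hp <;> simp_all
          · exact absurd hp (by simp)
        · rintro ⟨b, hb, rfl⟩
          refine Or.inl ⟨v, b, by simpa using hb, ?_, rfl, rfl⟩
          intro h
          rcases Sym2.eq_iff.mp h with ⟨h3, -⟩ | ⟨h3, -⟩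
          · exact h1 h3
          · exact h2 h3
      rw [SimpleGraph.degree, this, Finset.card_map]
      rfl

lemma subdivide_degree_inr (hadj : G.Adj w₁ w₂) :
    (subdivideEdge G w₁ w₂).degree (Sum.inr ()) = 2 := by
  classical
  have : (subdivideEdge G w₁ w₂).neighborFinset (Sum.inr ())
      = {Sum.inl w₁, Sum.inl w₂} := by
    ext q
    simp only [SimpleGraph.mem_neighborFinset, subdivideEdge_adj, Finset.mem_insert,
      Finset.mem_singleton]
    constructor
    · rintro (⟨a, b, hab, hne, heq, rfl⟩ | ⟨hp, rfl⟩ | ⟨hq, hp⟩) <;> simp_all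
    · rintro (rfl | rfl)
      · exact Or.inr (Or.inr ⟨Or.inl rfl, trivial⟩)
      · exact Or.inr (Or.inr ⟨Or.inr rfl, trivial⟩)
  rw [SimpleGraph.degree, this, Finset.card_insert_of_notMem (by simp [hadj.ne]),
    Finset.card_singleton]

lemma zagreb_subdivide (hadj : G.Adj w₁ w₂) :
    zagrebM1 (subdivideEdge G w₁ w₂) = zagrebM1 G + 4 := by
  rw [zagrebM1, Fintype.sum_sum_type]
  have h1 : ∑ v : V, (subdivideEdge G w₁ w₂).degree (Sum.inl v) ^ 2 = zagrebM1 G := by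
    rw [zagrebM1]
    exact Finset.sum_congr rfl fun v _ => by rw [subdivide_degree_inl G w₁ w₂ hadj v]
  have h2 : ∑ u : Unit, (subdivideEdge G w₁ w₂).degree (Sum.inr u) ^ 2 = 4 := by
    simp [subdivide_degree_inr G w₁ w₂ hadj]
  rw [h1, h2]

end

/-- Let `H` be connected with `|E(H)| ≥ |V(H)|` and let `u` lie on a cycle of
`H`. For `a, b ≥ 2`, form `H(a,b)` by attaching two pendant paths at `u`, with
`a - 1` and `b - 1` new vertices respectively. Then there is a graph `H'` on
`|V(H)| + 1` vertices obtained from `H` by subdividing an edge `w₁w₂` lying on a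
cycle of `H` (the new subdivision vertex being `w`), such that
`M₁(H(a,b)) ≥ M₁(H'` with a single pendant path of `a + b - 3` new vertices
attached at `w)`. -/
theorem M1_attachPaths_subdivide_ge {V : Type*} [Fintype V] (H : SimpleGraph V)
    (hconn : H.Connected) (hE : Fintype.card V ≤ H.edgeSet.ncard)
    (u : V)
    (hcyc : ∃ (x : V) (c : H.Walk x x), c.IsCycle ∧ u ∈ c.support)
    (a b : ℕ) (ha : 2 ≤ a) (hb : 2 ≤ b) :
    ∃ w₁ w₂ : V, H.Adj w₁ w₂ ∧
      (∃ (x : V) (c : H.Walk x x), c.IsCycle ∧ s(w₁, w₂) ∈ c.edges) ∧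
      zagrebM1 (attachPath (attachPath H u (a - 1)) (Sum.inl u) (b - 1)) ≥
        zagrebM1 (attachPath (subdivideEdge H w₁ w₂) (Sum.inr ()) (a + b - 3)) := by
    classical
  obtain ⟨x, c, hc, hu⟩ := hcyc
  -- extract an edge of the cycle
  cases c with
  | nil => exact absurd (hc.three_le_length) (by simp)
  | cons hadj p =>
    rename_i y
    refine ⟨x, y, hadj, ⟨x, SimpleGraph.Walk.cons hadj p, hc, by simp⟩, ?_⟩
    -- degree of u is positive
    have hdu : 1 ≤ H.degree u := by
      rw [← SimpleGraph.card_neighborFinset_eq_degree]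
      refine Finset.card_pos.2 ?_
      by_cases hux : u = x
      · exact ⟨y, by simp [SimpleGraph.mem_neighborFinset, hux ▸ hadj]⟩
      · obtain ⟨w⟩ := hconn.preconnected u x
        cases w with
        | nil => exact absurd rfl hux
        | cons h' p' =>
          rename_i z
          exact ⟨z, by simp [SimpleGraph.mem_neighborFinset, h']⟩
    set d := H.degree u with hd
    have ht₁ : 0 < a - 1 := by omega
    have ht₂ : 0 < b - 1 := by omega
    have ht₃ : 0 < a + b - 3 := by omega
    have E1 := zagreb_attach H u (a - 1) ht₁
    have deg1 : (attachPath H u (a - 1)).degree (Sum.inl u) = d + 1 := by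
      rw [attach_degree_inl H u (a - 1) ht₁ u, if_pos rfl]
    have E2 := zagreb_attach (attachPath H u (a - 1)) (Sum.inl u) (b - 1) ht₂
    rw [deg1] at E2
    have E3 := zagreb_subdivide H x y hadj
    have E4 := zagreb_attach (subdivideEdge H x y) (Sum.inr ()) (a + b - 3) ht₃
    rw [subdivide_degree_inr H x y hadj] at E4
    have hq1 : (d + 1) ^ 2 = d ^ 2 + 2 * d + 1 := by ring
    have hq2 : (d + 1 + 1) ^ 2 = d ^ 2 + 4 * d + 4 := by ring
    have hq3 : (2 : ℕ) ^ 2 = 4 := by norm_num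
    have hq4 : (2 + 1 : ℕ) ^ 2 = 9 := by norm_num
    rw [hq1, hq2] at E2
    rw [hq1] at E1
    rw [hq3, hq4] at E4
    generalize hD : d ^ 2 = D at E1 E2
    omega
end

section
/- Let n and k be integers with k ≥ 1 and n − k ≥ 3. Then M₁(C_{n,k}) = 4n + 2, and for k ≥ 2, M₂(C_{n,k}) = 4n + 4. -/
open scoped Classical

/-- The second Zagreb index: the sum over all edges of the product of the
degrees of the two endpoints. -/
noncomputable def zagrebM2 {V : Type*} [Fintype V] (G : SimpleGraph V) : ℕ :=
  ∑ e ∈ G.edgeFinset,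
    Sym2.lift ⟨fun x y => G.degree x * G.degree y, fun _ _ => Nat.mul_comm _ _⟩ e

/-- The graph `C_{n,k}` on `n` vertices: the cycle on the `n - k` vertices
`k, k+1, …, n-1` together with a pendant path `0 – 1 – ⋯ – k` (with `k` edges
and `k` vertices off the cycle) attached at the cycle vertex `k`. Its edges are
those of the Hamiltonian path `0 – 1 – ⋯ – (n-1)` together with the edge
joining `k` and `n-1`. -/
def cnk (n k : ℕ) : SimpleGraph (Fin n) :=
  SimpleGraph.fromEdgeSet
    ({e | ∃ i j : Fin n, (j : ℕ) = (i : ℕ) + 1 ∧ e = s(i, j)}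
      ∪ {e | ∃ i j : Fin n, (i : ℕ) = k ∧ (j : ℕ) = n - 1 ∧ e = s(i, j)})

lemma cnk_adj (n k : ℕ) (h : k + 3 ≤ n) (a b : Fin n) :
    (cnk n k).Adj a b ↔ ((b:ℕ) = (a:ℕ) + 1 ∨ (a:ℕ) = (b:ℕ) + 1 ∨
      ((a:ℕ) = k ∧ (b:ℕ) = n-1) ∨ ((b:ℕ) = k ∧ (a:ℕ) = n-1)) := by
  have ha := a.isLt
  have hb := b.isLt
  rw [cnk, SimpleGraph.fromEdgeSet_adj]
  simp only [Set.mem_union, Set.mem_setOf_eq, Sym2.eq, Sym2.rel_iff', Prod.mk.injEq,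
    Prod.swap_prod_mk]
  constructor
  · rintro ⟨hs | hs, hne⟩
    · obtain ⟨i, j, hij, ⟨rfl, rfl⟩ | ⟨rfl, rfl⟩⟩ := hs
      · left; exact hij
      · right; left; exact hij
    · obtain ⟨i, j, hik, hjn, ⟨rfl, rfl⟩ | ⟨rfl, rfl⟩⟩ := hs
      · right; right; left; exact ⟨hik, hjn⟩
      · right; right; right; exact ⟨hik, hjn⟩
  · intro hcase
    have hne : a ≠ b := by
      rw [Ne, Fin.ext_iff]; omega
    refine ⟨?_, hne⟩
    rcases hcase with h1 | h1 | h1 | h1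
    · exact Or.inl ⟨a, b, h1, Or.inl ⟨rfl, rfl⟩⟩
    · exact Or.inl ⟨b, a, h1, Or.inr ⟨rfl, rfl⟩⟩
    · exact Or.inr ⟨a, b, h1.1, h1.2, Or.inl ⟨rfl, rfl⟩⟩
    · exact Or.inr ⟨b, a, h1.1, h1.2, Or.inr ⟨rfl, rfl⟩⟩

lemma card_filter_fin (n : ℕ) (P : ℕ → Prop) [DecidablePred P] :
    (Finset.univ.filter (fun u : Fin n => P u.val)).card = ((Finset.range n).filter P).card := by
  rw [Finset.card_filter, Finset.card_filter,
    Fin.sum_univ_eq_sum_range (fun m => if P m then 1 else 0)]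

lemma cnk_degree (n k : ℕ) (hk : 1 ≤ k) (h : k + 3 ≤ n) (v : Fin n) :
    (cnk n k).degree v = if (v:ℕ) = 0 then 1 else if (v:ℕ) = k then 3 else 2 := by
  classical
  have hv := v.isLt
  have hdeg : (cnk n k).degree v =
      ((Finset.range n).filter (fun m => m = (v:ℕ) + 1 ∨ (v:ℕ) = m + 1 ∨
        ((v:ℕ) = k ∧ m = n-1) ∨ (m = k ∧ (v:ℕ) = n-1))).card := by
    rw [← card_filter_fin]
    rw [SimpleGraph.degree]
    congr 1
    ext u
    simp only [SimpleGraph.mem_neighborFinset, Finset.mem_filter, Finset.mem_univ, true_and]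
    rw [cnk_adj n k h]
  rw [hdeg]
  by_cases hv0 : (v:ℕ) = 0
  · have : (Finset.range n).filter (fun m => m = (v:ℕ) + 1 ∨ (v:ℕ) = m + 1 ∨
        ((v:ℕ) = k ∧ m = n-1) ∨ (m = k ∧ (v:ℕ) = n-1)) = {1} := by
      ext m
      simp only [Finset.mem_filter, Finset.mem_range, Finset.mem_singleton]
      omega
    rw [this]
    simp [hv0]
  · by_cases hvk : (v:ℕ) = k
    · have : (Finset.range n).filter (fun m => m = (v:ℕ) + 1 ∨ (v:ℕ) = m + 1 ∨
          ((v:ℕ) = k ∧ m = n-1) ∨ (m = k ∧ (v:ℕ) = n-1)) = {k-1, k+1, n-1} := by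
        ext m
        simp only [Finset.mem_filter, Finset.mem_range, Finset.mem_insert, Finset.mem_singleton]
        omega
      rw [this]
      rw [Finset.card_insert_of_notMem (by simp; omega),
        Finset.card_insert_of_notMem (by simp; omega), Finset.card_singleton]
      rw [if_neg hv0, if_pos hvk]
    · by_cases hvl : (v:ℕ) = n - 1
      · have : (Finset.range n).filter (fun m => m = (v:ℕ) + 1 ∨ (v:ℕ) = m + 1 ∨
            ((v:ℕ) = k ∧ m = n-1) ∨ (m = k ∧ (v:ℕ) = n-1)) = {n-2, k} := by
          ext m
          simp only [Finset.mem_filter, Finset.mem_range, Finset.mem_insert, Finset.mem_singleton]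
          omega
        rw [this]
        rw [Finset.card_insert_of_notMem (by simp; omega), Finset.card_singleton]
        rw [if_neg hv0, if_neg hvk]
      · have : (Finset.range n).filter (fun m => m = (v:ℕ) + 1 ∨ (v:ℕ) = m + 1 ∨
            ((v:ℕ) = k ∧ m = n-1) ∨ (m = k ∧ (v:ℕ) = n-1)) = {(v:ℕ)-1, (v:ℕ)+1} := by
          ext m
          simp only [Finset.mem_filter, Finset.mem_range, Finset.mem_insert, Finset.mem_singleton]
          omega
        rw [this]
        rw [Finset.card_insert_of_notMem (by simp only [Finset.mem_singleton]; omega), Finset.card_singleton]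
        rw [if_neg hv0, if_neg hvk]


lemma cnk_M1 (n k : ℕ) (hk : 1 ≤ k) (h : k + 3 ≤ n) :
    zagrebM1 (cnk n k) = 4 * n + 2 := by
  rw [zagrebM1]
  simp_rw [cnk_degree n k hk h]
  rw [Fin.sum_univ_eq_sum_range (fun m => (if m = 0 then 1 else if m = k then 3 else 2) ^ 2)]
  have h0 : 0 ∈ Finset.range n := by simp; omega
  have hkm : k ∈ (Finset.range n).erase 0 := by simp; omega
  rw [← Finset.add_sum_erase _ _ h0, ← Finset.add_sum_erase _ _ hkm]
  have hrest : ∑ m ∈ ((Finset.range n).erase 0).erase k,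
      (if m = 0 then 1 else if m = k then 3 else 2) ^ 2 = 4 * (n - 2) := by
    rw [Finset.sum_congr rfl (g := fun _ => 4) (fun m hm => by
      simp only [Finset.mem_erase, Finset.mem_range] at hm
      rw [if_neg hm.2.1, if_neg hm.1]; norm_num)]
    rw [Finset.sum_const, Finset.card_erase_of_mem hkm, Finset.card_erase_of_mem h0,
      Finset.card_range, smul_eq_mul]
    omega
  rw [hrest]
  have hk0 : k ≠ 0 := by omega
  rw [if_pos rfl, if_neg hk0, if_pos rfl]
  omega

lemma sum_filter_fin (n : ℕ) (P : ℕ → Prop) [DecidablePred P] (f : ℕ → ℕ) :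
    ∑ i ∈ Finset.univ.filter (fun i : Fin n => P i.val), f i.val
      = ∑ m ∈ (Finset.range n).filter P, f m := by
  rw [Finset.sum_filter, Finset.sum_filter,
    Fin.sum_univ_eq_sum_range (fun m => if P m then f m else 0)]

lemma cnk_M2 (n k : ℕ) (hk : 2 ≤ k) (h : k + 3 ≤ n) :
    zagrebM2 (cnk n k) = 4 * n + 4 := by
  classical
  have hk1 : 1 ≤ k := by omega
  set sc : Fin n → Fin n := fun i =>
    if hi : (i:ℕ) + 1 < n then (⟨(i:ℕ) + 1, hi⟩ : Fin n) else i with hsc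
  set K : Fin n := ⟨k, by omega⟩ with hK
  set L : Fin n := ⟨n - 1, by omega⟩ with hL
  have hedge : (cnk n k).edgeFinset =
      insert s(K, L) ((Finset.univ.filter (fun i : Fin n => (i:ℕ) + 1 < n)).image
        (fun i => s(i, sc i))) := by
    ext e
    induction e using Sym2.ind with
    | _ a b =>
      rw [SimpleGraph.mem_edgeFinset, SimpleGraph.mem_edgeSet, cnk_adj n k h,
        Finset.mem_insert, Finset.mem_image]
      constructor
      · rintro (h1 | h1 | h1 | h1)
        · right
          refine ⟨a, by simp [Finset.mem_filter]; omega, ?_⟩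
          have : sc a = b := by
            rw [hsc]; simp only
            rw [dif_pos (by omega : (a:ℕ) + 1 < n)]
            exact Fin.ext h1.symm
          rw [this]
        · right
          refine ⟨b, by simp [Finset.mem_filter]; omega, ?_⟩
          have : sc b = a := by
            rw [hsc]; simp only
            rw [dif_pos (by omega : (b:ℕ) + 1 < n)]
            exact Fin.ext h1.symm
          rw [this, Sym2.eq_swap]
        · left
          have ha : a = K := Fin.ext h1.1
          have hb : b = L := Fin.ext h1.2
          rw [ha, hb]
        · left
          have ha : a = L := Fin.ext h1.2
          have hb : b = K := Fin.ext h1.1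
          rw [ha, hb, Sym2.eq_swap]
      · rintro (h1 | ⟨i, hi, h1⟩)
        · rw [Sym2.eq, Sym2.rel_iff', Prod.mk.injEq, Prod.swap_prod_mk, Prod.mk.injEq] at h1
          rcases h1 with ⟨rfl, rfl⟩ | ⟨rfl, rfl⟩
          · right; right; left; exact ⟨rfl, rfl⟩
          · right; right; right; exact ⟨rfl, rfl⟩
        · simp only [Finset.mem_filter, Finset.mem_univ, true_and] at hi
          have hsci : (sc i : ℕ) = (i:ℕ) + 1 := by
            rw [hsc]; simp only; rw [dif_pos hi]
          rw [Sym2.eq, Sym2.rel_iff', Prod.mk.injEq, Prod.swap_prod_mk, Prod.mk.injEq] at h1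
          rcases h1 with ⟨rfl, rfl⟩ | ⟨rfl, rfl⟩
          · left; exact hsci
          · right; left; exact hsci
  have hKv : (K:ℕ) = k := rfl
  have hLv : (L:ℕ) = n - 1 := rfl
  have hscv : ∀ i : Fin n, (i:ℕ) + 1 < n → (sc i : ℕ) = (i:ℕ) + 1 := by
    intro i hi
    rw [hsc]; simp only; rw [dif_pos hi]
  have hnot : s(K, L) ∉ (Finset.univ.filter (fun i : Fin n => (i:ℕ) + 1 < n)).image
      (fun i => s(i, sc i)) := by
    rw [Finset.mem_image]
    rintro ⟨i, hi, h1⟩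
    simp only [Finset.mem_filter, Finset.mem_univ, true_and] at hi
    have hsci := hscv i hi
    rw [Sym2.eq, Sym2.rel_iff', Prod.mk.injEq, Prod.swap_prod_mk, Prod.mk.injEq] at h1
    rcases h1 with ⟨h2, h3⟩ | ⟨h2, h3⟩ <;>
      [skip; skip] <;>
      (apply_fun Fin.val at h2 h3) <;> omega
  have hinj : ∀ i ∈ Finset.univ.filter (fun i : Fin n => (i:ℕ) + 1 < n),
      ∀ j ∈ Finset.univ.filter (fun i : Fin n => (i:ℕ) + 1 < n),
      s(i, sc i) = s(j, sc j) → i = j := by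
    intro i hi j hj h1
    simp only [Finset.mem_filter, Finset.mem_univ, true_and] at hi hj
    have hsci := hscv i hi
    have hscj := hscv j hj
    rw [Sym2.eq, Sym2.rel_iff', Prod.mk.injEq, Prod.swap_prod_mk, Prod.mk.injEq] at h1
    rcases h1 with ⟨h2, h3⟩ | ⟨h2, h3⟩
    · exact h2
    · apply_fun Fin.val at h2 h3
      exact absurd rfl (by omega : i ≠ i)
  rw [zagrebM2, hedge, Finset.sum_insert hnot, Finset.sum_image hinj]
  set D : ℕ → ℕ := fun m => if m = 0 then 1 else if m = k then 3 else 2 with hD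
  have hDm : ∀ m, D m = if m = 0 then 1 else if m = k then 3 else 2 := fun m => by rw [hD]
  have hDgen : ∀ m, m ≠ 0 → m ≠ k → D m = 2 := by
    intro m h1 h2
    rw [hDm m, if_neg h1, if_neg h2]
  have hD0 : D 0 = 1 := by rw [hDm 0, if_pos rfl]
  have hDk : D k = 3 := by rw [hDm k, if_neg (by omega), if_pos rfl]
  have hdeg : ∀ v : Fin n, (cnk n k).degree v = D (v:ℕ) := fun v => by
    rw [cnk_degree n k hk1 h v, hDm]
  have hfirst : Sym2.lift ⟨fun x y => (cnk n k).degree x * (cnk n k).degree y,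
      fun _ _ => Nat.mul_comm _ _⟩ s(K, L) = 6 := by
    show (cnk n k).degree K * (cnk n k).degree L = 6
    rw [hdeg, hdeg, hKv, hLv, hDk, hDgen (n-1) (by omega) (by omega)]
  rw [hfirst]
  have hsum2 : ∑ i ∈ Finset.univ.filter (fun i : Fin n => (i:ℕ) + 1 < n),
      Sym2.lift ⟨fun x y => (cnk n k).degree x * (cnk n k).degree y,
        fun _ _ => Nat.mul_comm _ _⟩ s(i, sc i)
      = ∑ i ∈ Finset.univ.filter (fun i : Fin n => (i:ℕ) + 1 < n), D (i:ℕ) * D ((i:ℕ) + 1) := by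
    refine Finset.sum_congr rfl (fun i hi => ?_)
    simp only [Finset.mem_filter, Finset.mem_univ, true_and] at hi
    show (cnk n k).degree i * (cnk n k).degree (sc i) = D (i:ℕ) * D ((i:ℕ) + 1)
    rw [hdeg, hdeg, hscv i hi]
  rw [hsum2, sum_filter_fin n (fun m => m + 1 < n) (fun m => D m * D (m + 1))]
  have hrange : (Finset.range n).filter (fun m => m + 1 < n) = Finset.range (n - 1) := by
    ext m
    simp only [Finset.mem_filter, Finset.mem_range]
    omega
  rw [hrange]
  have h0 : 0 ∈ Finset.range (n - 1) := by simp; omega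
  have h1 : k - 1 ∈ (Finset.range (n - 1)).erase 0 := by simp; omega
  have h2 : k ∈ ((Finset.range (n - 1)).erase 0).erase (k - 1) := by
    simp only [Finset.mem_erase, Finset.mem_range]
    omega
  rw [← Finset.add_sum_erase _ _ h0, ← Finset.add_sum_erase _ _ h1, ← Finset.add_sum_erase _ _ h2]
  have hrest : ∑ m ∈ ((((Finset.range (n - 1)).erase 0).erase (k - 1)).erase k),
      D m * D (m + 1) = 4 * (n - 4) := by
    rw [Finset.sum_congr rfl (g := fun _ => 4) (fun m hm => by
      simp only [Finset.mem_erase, Finset.mem_range] at hm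
      rw [hDgen m (by omega) (by omega), hDgen (m+1) (by omega) (by omega)])]
    rw [Finset.sum_const, Finset.card_erase_of_mem h2, Finset.card_erase_of_mem h1,
      Finset.card_erase_of_mem h0, Finset.card_range, smul_eq_mul]
    omega
  rw [hrest]
  have e0 : D 0 * D (0 + 1) = 2 := by
    rw [hD0, hDgen (0+1) (by omega) (by omega)]
  have e1 : D (k - 1) * D (k - 1 + 1) = 6 := by
    have hkk : k - 1 + 1 = k := by omega
    rw [hkk, hDk, hDgen (k-1) (by omega) (by omega)]
  have e2 : D k * D (k + 1) = 6 := by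
    rw [hDk, hDgen (k+1) (by omega) (by omega)]
  rw [e0, e1, e2]
  omega

/-- For `k ≥ 1` and `n - k ≥ 3` one has `M₁(C_{n,k}) = 4n + 2`, and if moreover
`k ≥ 2`, then `M₂(C_{n,k}) = 4n + 4`. -/
theorem zagreb_cnk (n k : ℕ) (hk : 1 ≤ k) (hnk : 3 ≤ n - k) :
    zagrebM1 (cnk n k) = 4 * n + 2 ∧
      (2 ≤ k → zagrebM2 (cnk n k) = 4 * n + 4) := by
  have h : k + 3 ≤ n := by omega
  exact ⟨cnk_M1 n k hk h, fun hk2 => cnk_M2 n k hk2 h⟩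
end
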